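/- arXiv:2307.09896 — 2 statements merged into one kernel-verified Lean document; each statement's English description precedes it below -/
import Mathlib

section
/- Let Z_1,...,Z_t be i.i.d. random variables taking values in a set S, let A, B be disjoint events with p = P(Z_1 ∈ A), q = P(Z_1 ∈ B), and suppose q > p ≥ 0. Then P(∑_{i=1}^t 1_{Z_i∈A} ≥ ∑_{i=1}^t 1_{Z_i∈B}) ≤ (1 - (√q - √p)²)^t. -/
open MeasureTheory ProbabilityTheory Real Finset

/-! The event `{∑ 1_A(Zᵢ) ≥ ∑ 1_B(Zᵢ)}` is `{∑ Xᵢ ≥ 0}` for the independent `{-1, 0, 1}`-valued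
variables `Xᵢ = 1_A(Zᵢ) - 1_B(Zᵢ)`, whose common moment generating function is
`1 + (e^β - 1) p + (e^{-β} - 1) q`. Chernoff's bound gives this to the power `t` for every
`β ≥ 0`; at `e^β = √(q/p)` it equals `1 - (√q - √p)²`, and for `p = 0` that value is the limit
as `β → ∞`. -/

/-- The moment generating function at `β` of a random variable equal to `1` with probability `p`,
to `-1` with probability `q` and to `0` otherwise. -/
noncomputable def plusMinusMgf (p q β : ℝ) : ℝ :=
  1 + (exp β - 1) * p + (exp (-β) - 1) * q

lemma plusMinusMgf_sq_sq_log_div {a b : ℝ} (ha : 0 < a) (hb : 0 < b) :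
    plusMinusMgf (a ^ 2) (b ^ 2) (log (b / a)) = 1 - (b - a) ^ 2 := by
  rw [plusMinusMgf, exp_neg, exp_log (div_pos hb ha), inv_div]
  field_simp
  ring

lemma tendsto_plusMinusMgf_zero_atTop (q : ℝ) :
    Filter.Tendsto (plusMinusMgf 0 q) Filter.atTop (nhds (1 - q)) := by
  have h := ((tendsto_exp_neg_atTop_nhds_zero.sub_const 1).mul_const q).const_add 1
  convert h using 2 with β
  · simp [plusMinusMgf]
  · ring

lemma le_pow_of_forall_le_pow_plusMinusMgf {p q x : ℝ} {t : ℕ} (hp : 0 ≤ p) (hpq : p ≤ q)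
    (h : ∀ β, 0 ≤ β → x ≤ plusMinusMgf p q β ^ t) : x ≤ (1 - (√q - √p) ^ 2) ^ t := by
  rcases hp.eq_or_lt with rfl | hp
  · rw [sqrt_zero, sub_zero, sq_sqrt hpq]
    exact ge_of_tendsto ((tendsto_plusMinusMgf_zero_atTop q).pow t)
      (Filter.eventually_atTop.2 ⟨0, h⟩)
  · have hβ : 0 ≤ log (√q / √p) :=
      log_nonneg ((one_le_div (sqrt_pos.2 hp)).2 (sqrt_le_sqrt hpq))
    have hval := plusMinusMgf_sq_sq_log_div (sqrt_pos.2 hp) (sqrt_pos.2 (hp.trans_le hpq))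
    rw [sq_sqrt hp.le, sq_sqrt (hp.le.trans hpq)] at hval
    simpa only [hval] using h _ hβ

section IndicatorDifference

variable {Ω : Type*} {E F : Set Ω}

lemma exp_mul_indicator_sub_indicator (hEF : Disjoint E F) (β : ℝ) (ω : Ω) :
    exp (β * (E.indicator 1 ω - F.indicator 1 ω))
      = 1 + E.indicator (fun _ => exp β - 1) ω + F.indicator (fun _ => exp (-β) - 1) ω := by
  by_cases hE : ω ∈ E
  · have hF : ω ∉ F := hEF.notMem_of_mem_left hE
    simp [hE, hF]
  · by_cases hF : ω ∈ F <;> simp [hE, hF]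

variable [MeasurableSpace Ω] {μ : Measure Ω}

lemma integrable_exp_mul_indicator_sub_indicator [IsFiniteMeasure μ] (hE : MeasurableSet E)
    (hF : MeasurableSet F) (hEF : Disjoint E F) (β : ℝ) :
    Integrable (fun ω => exp (β * (E.indicator 1 ω - F.indicator 1 ω))) μ := by
  simp_rw [exp_mul_indicator_sub_indicator hEF]
  exact ((integrable_const 1).add ((integrable_const _).indicator hE)).add
    ((integrable_const _).indicator hF)

lemma mgf_indicator_sub_indicator [IsProbabilityMeasure μ] (hE : MeasurableSet E)
    (hF : MeasurableSet F) (hEF : Disjoint E F) (β : ℝ) :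
    mgf (fun ω => E.indicator 1 ω - F.indicator 1 ω) μ β
      = plusMinusMgf (μ.real E) (μ.real F) β := by
  simp_rw [mgf, exp_mul_indicator_sub_indicator hEF]
  rw [integral_add ((integrable_const 1).add ((integrable_const _).indicator hE))
      ((integrable_const _).indicator hF), integral_add (integrable_const 1)
      ((integrable_const _).indicator hE), integral_const, integral_indicator_const _ hE,
    integral_indicator_const _ hF]
  simp [plusMinusMgf, mul_comm]

end IndicatorDifference

lemma ProbabilityTheory.iIndepFun.measure_sum_ge_le_prod_mgf {Ω ι : Type*} [MeasurableSpace Ω]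
    [Fintype ι] {μ : Measure Ω} {X : ι → Ω → ℝ} (h_indep : iIndepFun X μ)
    (h_meas : ∀ i, Measurable (X i))
    {β : ℝ} (hβ : 0 ≤ β) (h_int : ∀ i, Integrable (fun ω => exp (β * X i ω)) μ) (ε : ℝ) :
    μ.real {ω | ε ≤ ∑ i, X i ω} ≤ exp (-β * ε) * ∏ i, mgf (X i) μ β := by
  have := h_indep.isProbabilityMeasure
  have h := measure_ge_le_exp_mul_mgf ε hβ
    (h_indep.integrable_exp_mul_sum h_meas (s := univ) fun i _ => h_int i)
  rw [h_indep.mgf_sum h_meas] at h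
  simpa only [Finset.sum_apply] using h

theorem stmt_0_general {Ω S : Type*} [MeasurableSpace Ω] [MeasurableSpace S]
    (μ : Measure Ω) [IsProbabilityMeasure μ] (t : ℕ) (Z : Fin t → Ω → S)
    (hmeas : ∀ i, Measurable (Z i))
    (hindep : iIndepFun Z μ)
    (A B : Set S) (hA : MeasurableSet A) (hB : MeasurableSet B)
    (hdisj : Disjoint A B) (p q : ℝ)
    (hp : ∀ i, p = (μ {ω | Z i ω ∈ A}).toReal)
    (hq : ∀ i, q = (μ {ω | Z i ω ∈ B}).toReal)
    (hpq : p < q) (hp0 : 0 ≤ p) :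
    (μ {ω | (∑ i : Fin t, A.indicator (fun _ => (1 : ℝ)) (Z i ω))
          ≥ ∑ i : Fin t, B.indicator (fun _ => (1 : ℝ)) (Z i ω)}).toReal
      ≤ (1 - (sqrt q - sqrt p) ^ 2) ^ t := by
  set X : Fin t → Ω → ℝ := fun i ω => (Z i ⁻¹' A).indicator 1 ω - (Z i ⁻¹' B).indicator 1 ω
  have hE i : MeasurableSet (Z i ⁻¹' A) := hmeas i hA
  have hF i : MeasurableSet (Z i ⁻¹' B) := hmeas i hB
  have hEF i : Disjoint (Z i ⁻¹' A) (Z i ⁻¹' B) := hdisj.preimage (Z i)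
  have hX_meas i : Measurable (X i) :=
    (measurable_const.indicator (hE i)).sub (measurable_const.indicator (hF i))
  have hX_indep : iIndepFun X μ :=
    hindep.comp (fun _ s => A.indicator 1 s - B.indicator 1 s)
      fun _ => (measurable_const.indicator hA).sub (measurable_const.indicator hB)
  refine le_pow_of_forall_le_pow_plusMinusMgf hp0 hpq.le fun β hβ => ?_
  calc (μ {ω | (∑ i, A.indicator (fun _ => (1 : ℝ)) (Z i ω))
          ≥ ∑ i, B.indicator (fun _ => (1 : ℝ)) (Z i ω)}).toReal
      = μ.real {ω | 0 ≤ ∑ i, X i ω} := by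
        simp only [measureReal_def, X, sum_sub_distrib, sub_nonneg]
        rfl
    _ ≤ exp (-β * 0) * ∏ i, mgf (X i) μ β := hX_indep.measure_sum_ge_le_prod_mgf hX_meas hβ
        (fun i => integrable_exp_mul_indicator_sub_indicator (hE i) (hF i) (hEF i) β) 0
    _ = plusMinusMgf p q β ^ t := by
        rw [mul_zero, exp_zero, one_mul, ← Fin.prod_const]
        refine prod_congr rfl fun i _ => ?_
        rw [mgf_indicator_sub_indicator (hE i) (hF i) (hEF i), hp i, hq i]
        rfl

/-- Chernoff bound for counts: if `Z₁,…,Z_t` are i.i.d. `S`-valued random variables,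
`A, B` disjoint measurable sets with `p = P(Z₁ ∈ A)`, `q = P(Z₁ ∈ B)` and `q > p ≥ 0`,
then `P(∑ 1_{Zᵢ∈A} ≥ ∑ 1_{Zᵢ∈B}) ≤ (1 - (√q - √p)²)^t`. -/
theorem stmt_0 {Ω S : Type*} [MeasurableSpace Ω] [MeasurableSpace S]
    (μ : Measure Ω) [IsProbabilityMeasure μ] (t : ℕ) (Z : Fin t → Ω → S)
    (hmeas : ∀ i, Measurable (Z i))
    (hindep : iIndepFun Z μ)
    (hident : ∀ i j, Measure.map (Z i) μ = Measure.map (Z j) μ)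
    (A B : Set S) (hA : MeasurableSet A) (hB : MeasurableSet B)
    (hdisj : Disjoint A B) (p q : ℝ)
    (hp : ∀ i, p = (μ {ω | Z i ω ∈ A}).toReal)
    (hq : ∀ i, q = (μ {ω | Z i ω ∈ B}).toReal)
    (hpq : p < q) (hp0 : 0 ≤ p) :
    (μ {ω | (∑ i : Fin t, A.indicator (fun _ => (1 : ℝ)) (Z i ω))
          ≥ ∑ i : Fin t, B.indicator (fun _ => (1 : ℝ)) (Z i ω)}).toReal
      ≤ (1 - (sqrt q - sqrt p) ^ 2) ^ t :=
  stmt_0_general μ t Z hmeas hindep A B hA hB hdisj p q hp hq hpq hp0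
end

section
/- Let g : ℝ^d → {1,...,M} be a measurable classifier, let Y take values in {1,...,M}, and assume that conditionally on Y = j, the observations V_1,...,V_t are i.i.d. with p_{j,ℓ} = P(g(V_1) = ℓ | Y = j). If p_{j,j} > p_{j,ℓ} for all ℓ ≠ j, then the majority-vote classifier g̃(V_1,...,V_t) = argmax_j ∑_{i=1}^t 1_{g(V_i)=j} satisfies P(g̃(V_1,...,V_t) ≠ Y) ≤ max_j ∑_{ℓ≠j} (1 - (√p_{j,j} - √p_{j,ℓ})²)^t. -/
open MeasureTheory ProbabilityTheory Real Finset

section Aux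

variable {Ω : Type*} [MeasurableSpace Ω]

/-- Expectation of a product of independent nonnegative random variables factorizes. -/
lemma aux_lintegral_prod (ν : Measure Ω) [IsProbabilityMeasure ν] {t : ℕ}
    (W : Fin t → Ω → ENNReal) (hW : ∀ i, Measurable (W i))
    (hind : iIndepFun W ν) (s : Finset (Fin t)) :
    ∫⁻ ω, ∏ i ∈ s, W i ω ∂ν = ∏ i ∈ s, ∫⁻ ω, W i ω ∂ν := by
  induction s using Finset.induction_on with
  | empty => simp
  | @insert i s hi ih =>
    have hg : Measurable (fun ω => ∏ k ∈ s, W k ω) :=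
      Finset.measurable_prod s (fun k _ => hW k)
    have hIF : IndepFun (W i) (∏ k ∈ s, W k) ν :=
      (hind.indepFun_finsetProd_of_notMem hW hi).symm
    have hIF' : IndepFun (W i) (fun ω => ∏ k ∈ s, W k ω) ν := by
      have : (fun ω => ∏ k ∈ s, W k ω) = ∏ k ∈ s, W k := by
        ext ω; simp [Finset.prod_apply]
      rw [this]; exact hIF
    calc ∫⁻ ω, ∏ k ∈ insert i s, W k ω ∂ν
        = ∫⁻ ω, W i ω * ∏ k ∈ s, W k ω ∂ν := by
          simp_rw [Finset.prod_insert hi]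
      _ = (∫⁻ ω, W i ω ∂ν) * ∫⁻ ω, ∏ k ∈ s, W k ω ∂ν :=
          lintegral_mul_eq_lintegral_mul_lintegral_of_indepFun''
            (hW i).aemeasurable hg.aemeasurable hIF'
      _ = ∏ k ∈ insert i s, ∫⁻ ω, W k ω ∂ν := by rw [ih, Finset.prod_insert hi]

/-- The Chernoff–Hellinger bound for one pair of labels. -/
lemma aux_chernoff (ν : Measure Ω) [IsProbabilityMeasure ν] {t M : ℕ}
    (X : Fin t → Ω → Fin M) (hX : ∀ i, Measurable (X i))
    (hind : iIndepFun X ν)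
    (j ℓ : Fin M) (hne : ℓ ≠ j) (q : Fin M → ℝ)
    (hq : ∀ k : Fin M, ∀ i : Fin t, q k = (ν {ω | X i ω = k}).toReal)
    (hql : 0 ≤ q ℓ) (hqj : q j ≤ 1) (hlt : q ℓ < q j) :
    ν {ω | (∑ i, if X i ω = j then (1:ℝ) else 0) ≤ ∑ i, if X i ω = ℓ then (1:ℝ) else 0}
      ≤ ENNReal.ofReal ((1 - (Real.sqrt (q j) - Real.sqrt (q ℓ)) ^ 2) ^ t) := by
  set a : ℝ := Real.sqrt (q ℓ) with ha_def
  set b : ℝ := Real.sqrt (q j) with hb_def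
  have hqj0 : 0 ≤ q j := le_trans hql hlt.le
  have ha0 : 0 ≤ a := Real.sqrt_nonneg _
  have hb0 : 0 < b := Real.sqrt_pos.mpr (lt_of_le_of_lt hql hlt)
  have hb1 : b ≤ 1 := by rw [hb_def]; exact Real.sqrt_le_one.mpr hqj
  have hab : a < b := Real.sqrt_lt_sqrt hql hlt
  have ha2 : a ^ 2 = q ℓ := Real.sq_sqrt hql
  have hb2 : b ^ 2 = q j := Real.sq_sqrt hqj0
  set c : ℝ := 1 - (b - a) ^ 2 with hc_def
  have hc0 : 0 ≤ c := by
    have h1 : (b - a) ^ 2 ≤ 1 ^ 2 := by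
      apply pow_le_pow_left₀ (by linarith) (by linarith)
    simp only [one_pow] at h1
    linarith [hc_def]
  set ψ : Fin M → ℝ := fun k => if k = j then a / b else if k = ℓ then b / a else 1 with hψ_def
  have hψ0 : ∀ k, 0 ≤ ψ k := by
    intro k; simp only [hψ_def]; split_ifs <;> positivity
  set W : Fin t → Ω → ENNReal := fun i ω => ENNReal.ofReal (ψ (X i ω)) with hW_def
  have hψmeas : Measurable ψ := measurable_of_countable ψ
  have hWmeas : ∀ i, Measurable (W i) :=
    fun i => ENNReal.measurable_ofReal.comp (hψmeas.comp (hX i))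
  have hWind : iIndepFun W ν :=
    hind.comp (fun _ => fun k => ENNReal.ofReal (ψ k))
      (fun _ => measurable_of_countable _)
  set A : Set Ω := {ω | (∑ i, if X i ω = j then (1:ℝ) else 0)
      ≤ ∑ i, if X i ω = ℓ then (1:ℝ) else 0} with hA_def
  have hmeasfib : ∀ (i : Fin t) (k : Fin M), MeasurableSet {ω | X i ω = k} :=
    fun i k => (hX i) (measurableSet_singleton k)
  have hA : MeasurableSet A := by
    apply measurableSet_le
    · exact Finset.measurable_sum _ (fun i _ =>
        Measurable.ite (hmeasfib i j) measurable_const measurable_const)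
    · exact Finset.measurable_sum _ (fun i _ =>
        Measurable.ite (hmeasfib i ℓ) measurable_const measurable_const)
  -- almost-everywhere good event when q ℓ = 0
  have hgood : ∀ᵐ ω ∂ν, q ℓ = 0 → ∀ i, X i ω ≠ ℓ := by
    by_cases hq0 : q ℓ = 0
    · have hnull : ∀ i, ν {ω | X i ω = ℓ} = 0 := by
        intro i
        have h1 := (hq ℓ i).symm.trans hq0
        rcases (ENNReal.toReal_eq_zero_iff _).mp h1 with h | h
        · exact h
        · exact absurd h (measure_ne_top ν _)
      have : ∀ᵐ ω ∂ν, ∀ i, X i ω ≠ ℓ := by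
        rw [ae_all_iff]
        intro i
        rw [ae_iff]
        simpa using hnull i
      filter_upwards [this] with ω hω _
      exact hω
    · filter_upwards with ω hω
      exact absurd hω hq0
  -- Step 1 : ν A ≤ ∫⁻ ∏ W
  have step1 : ν A ≤ ∫⁻ ω, ∏ i, W i ω ∂ν := by
    rw [← lintegral_indicator_one hA]
    refine lintegral_mono_ae ?_
    filter_upwards [hgood] with ω hgω
    by_cases hωA : ω ∈ A
    · rw [Set.indicator_of_mem hωA]
      have hprod : (∏ i, W i ω) = ENNReal.ofReal (∏ i, ψ (X i ω)) :=
        (ENNReal.ofReal_prod_of_nonneg (fun i _ => hψ0 _)).symm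
      rw [hprod]
      simp only [Pi.one_apply]
      rw [ENNReal.one_le_ofReal]
      -- real goal : 1 ≤ ∏ i, ψ (X i ω)
      set nj := (univ.filter fun i => X i ω = j).card with hnj_def
      set nl := (univ.filter fun i => X i ω = ℓ).card with hnl_def
      have hn' : nj ≤ nl := by
        have h1 : (∑ i, if X i ω = j then (1:ℝ) else 0) = (nj : ℝ) := by
          simp [hnj_def, Finset.sum_boole]
        have h2 : (∑ i, if X i ω = ℓ then (1:ℝ) else 0) = (nl : ℝ) := by
          simp [hnl_def, Finset.sum_boole]
        have := hωA
        rw [hA_def, Set.mem_setOf_eq, h1, h2] at this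
        exact_mod_cast this
      have hsplit : (∏ i, ψ (X i ω)) = (a / b) ^ nj * (b / a) ^ nl := by
        rw [← Finset.prod_filter_mul_prod_filter_not univ (fun i => X i ω = j)]
        have e1 : (∏ i ∈ univ.filter (fun i => X i ω = j), ψ (X i ω)) = (a / b) ^ nj := by
          rw [Finset.prod_congr rfl (fun i hi => ?_), Finset.prod_const, hnj_def]
          rw [(Finset.mem_filter.mp hi).2]
          simp [hψ_def]
        have e2 : (∏ i ∈ univ.filter (fun i => ¬ X i ω = j), ψ (X i ω)) = (b / a) ^ nl := by
          rw [← Finset.prod_filter_mul_prod_filter_not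
            (univ.filter (fun i => ¬ X i ω = j)) (fun i => X i ω = ℓ)]
          have e3 : (univ.filter (fun i => ¬ X i ω = j)).filter (fun i => X i ω = ℓ)
              = univ.filter (fun i => X i ω = ℓ) := by
            rw [Finset.filter_filter]
            apply Finset.filter_congr
            intro i _
            constructor
            · exact fun h => h.2
            · exact fun h => ⟨by rw [h]; exact hne, h⟩
          have e4 : (∏ i ∈ (univ.filter (fun i => ¬ X i ω = j)).filter
              (fun i => X i ω = ℓ), ψ (X i ω)) = (b / a) ^ nl := by
            rw [e3, Finset.prod_congr rfl (fun i hi => ?_), Finset.prod_const, hnl_def]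
            rw [(Finset.mem_filter.mp hi).2]
            simp [hψ_def, hne]
          have e5 : (∏ i ∈ (univ.filter (fun i => ¬ X i ω = j)).filter
              (fun i => ¬ X i ω = ℓ), ψ (X i ω)) = 1 := by
            apply Finset.prod_eq_one
            intro i hi
            have h1 := Finset.mem_filter.mp hi
            have h2 := Finset.mem_filter.mp h1.1
            simp [hψ_def, h2.2, h1.2]
          rw [e4, e5, mul_one]
        rw [e1, e2]
      rw [hsplit]
      by_cases hq0 : q ℓ = 0
      · have hnl0 : nl = 0 := by
          rw [hnl_def, Finset.card_eq_zero, Finset.filter_eq_empty_iff]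
          exact fun i _ => hgω hq0 i
        have hnj0 : nj = 0 := Nat.le_zero.mp (hnl0 ▸ hn')
        simp [hnl0, hnj0]
      · have ha0' : 0 < a := Real.sqrt_pos.mpr (lt_of_le_of_ne hql (Ne.symm hq0))
        have hba1 : 1 ≤ b / a := (one_le_div ha0').mpr hab.le
        calc (1:ℝ) = ((a / b) * (b / a)) ^ nj := by
              rw [div_mul_div_comm, mul_comm a b, div_self (by positivity), one_pow]
          _ = (a / b) ^ nj * (b / a) ^ nj := mul_pow _ _ _
          _ ≤ (a / b) ^ nj * (b / a) ^ nl := by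
              apply mul_le_mul_of_nonneg_left (pow_le_pow_right₀ hba1 hn') (by positivity)
    · rw [Set.indicator_of_notMem hωA]
      exact zero_le
  -- Step 2+3 : each factor integrates to ofReal c
  have hint : ∀ i : Fin t, ∫⁻ ω, W i ω ∂ν = ENNReal.ofReal c := by
    intro i
    have hrw : (fun ω => ψ (X i ω))
        = fun ω => ∑ k : Fin M, Set.indicator {ω' | X i ω' = k} (fun _ => ψ k) ω := by
      funext ω
      rw [Finset.sum_eq_single (X i ω)]
      · rw [Set.indicator_of_mem (by simp : ω ∈ {ω' | X i ω' = X i ω})]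
      · intro k _ hk
        exact Set.indicator_of_notMem (by simpa using (Ne.symm hk)) _
      · intro h; exact absurd (Finset.mem_univ _) h
    have hInt : Integrable (fun ω => ψ (X i ω)) ν := by
      rw [hrw]
      exact integrable_finset_sum _
        (fun k _ => (integrable_const (ψ k)).indicator (hmeasfib i k))
    have hIcalc : ∫ ω, ψ (X i ω) ∂ν = ∑ k : Fin M, q k * ψ k := by
      rw [hrw, integral_finset_sum _
        (fun k _ => (integrable_const (ψ k)).indicator (hmeasfib i k))]
      refine Finset.sum_congr rfl (fun k _ => ?_)
      rw [integral_indicator_const (ψ k) (hmeasfib i k), smul_eq_mul, hq k i, measureReal_def]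
    have hsum1 : ∑ k : Fin M, q k = 1 := by
      have h1 : ∑ k : Fin M, ν (X i ⁻¹' {k}) = ν (X i ⁻¹' ↑(univ : Finset (Fin M))) :=
        sum_measure_preimage_singleton univ (fun k _ => hmeasfib i k)
      have h2 : ∑ k : Fin M, ν (X i ⁻¹' {k}) = 1 := by
        rw [h1, Finset.coe_univ, Set.preimage_univ, measure_univ]
      calc ∑ k : Fin M, q k = ∑ k : Fin M, (ν (X i ⁻¹' {k})).toReal := by
            refine Finset.sum_congr rfl (fun k _ => ?_)
            rw [hq k i]; rfl
        _ = (∑ k : Fin M, ν (X i ⁻¹' {k})).toReal :=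
            (ENNReal.toReal_sum (fun k _ => measure_ne_top ν _)).symm
        _ = 1 := by rw [h2, ENNReal.toReal_one]
    have hℓmem : ℓ ∈ (univ : Finset (Fin M)).erase j := Finset.mem_erase.mpr ⟨hne, mem_univ _⟩
    have hval : ∑ k : Fin M, q k * ψ k = c := by
      have hd1 : ∀ f : Fin M → ℝ, ∑ k : Fin M, f k
          = f j + (f ℓ + ∑ k ∈ (univ.erase j).erase ℓ, f k) := by
        intro f
        rw [← Finset.add_sum_erase _ f (mem_univ j), ← Finset.add_sum_erase _ f hℓmem]
      have hrest : ∑ k ∈ (univ.erase j).erase ℓ, q k = 1 - q j - q ℓ := by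
        have := hd1 q
        rw [hsum1] at this
        linarith
      have hrest' : ∑ k ∈ (univ.erase j).erase ℓ, q k * ψ k
          = ∑ k ∈ (univ.erase j).erase ℓ, q k := by
        refine Finset.sum_congr rfl (fun k hk => ?_)
        have h1 := Finset.mem_erase.mp hk
        have h2 := Finset.mem_erase.mp h1.2
        simp [hψ_def, h1.1, h2.1]
      rw [hd1 (fun k => q k * ψ k), hrest', hrest]
      have hψj : ψ j = a / b := by simp [hψ_def]
      have hψℓ : ψ ℓ = b / a := by simp [hψ_def, hne]
      rw [hψj, hψℓ, ← ha2, ← hb2, hc_def]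
      by_cases hq0 : a = 0
      · rw [hq0]; simp
      · field_simp
        ring
    have : ∫⁻ ω, W i ω ∂ν = ENNReal.ofReal (∫ ω, ψ (X i ω) ∂ν) :=
      (ofReal_integral_eq_lintegral_ofReal hInt
        (Filter.Eventually.of_forall (fun ω => hψ0 _))).symm
    rw [this, hIcalc, hval]
  -- combine
  calc ν A ≤ ∫⁻ ω, ∏ i, W i ω ∂ν := step1
    _ = ∏ i : Fin t, ∫⁻ ω, W i ω ∂ν := aux_lintegral_prod ν W hWmeas hWind univ
    _ = (ENNReal.ofReal c) ^ t := by
        rw [Finset.prod_congr rfl (fun i _ => hint i), Finset.prod_const, Finset.card_univ,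
          Fintype.card_fin]
    _ = ENNReal.ofReal (c ^ t) := (ENNReal.ofReal_pow hc0 t).symm

end Aux

/-- Theorem 1: majority vote over `t` conditionally i.i.d. repeated observations.
If `p_{j,ℓ} = P(g(V₁) = ℓ | Y = j)` and `p_{j,j} > p_{j,ℓ}` for `ℓ ≠ j`, then the
majority-vote classifier `g̃` satisfies
`P(g̃ ≠ Y) ≤ max_j ∑_{ℓ≠j} (1 - (√p_{j,j} - √p_{j,ℓ})²)^t`. -/
theorem stmt_10 {Ω : Type*} [MeasurableSpace Ω] (μ : Measure Ω) [IsProbabilityMeasure μ]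
    (d M t : ℕ) [NeZero M]
    (g : (Fin d → ℝ) → Fin M) (hg : Measurable g)
    (Y : Ω → Fin M) (hY : Measurable Y)
    (V : Fin t → Ω → (Fin d → ℝ)) (hV : ∀ i, Measurable (V i))
    (hindep : ∀ j : Fin M, iIndepFun V (μ[|Y ⁻¹' {j}]))
    (hident : ∀ j : Fin M, ∀ i i' : Fin t,
      Measure.map (V i) (μ[|Y ⁻¹' {j}]) = Measure.map (V i') (μ[|Y ⁻¹' {j}]))
    (p : Fin M → Fin M → ℝ)
    (hp : ∀ j ℓ : Fin M, ∀ i : Fin t, p j ℓ = ((μ[|Y ⁻¹' {j}]) {ω | g (V i ω) = ℓ}).toReal)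
    (hdom : ∀ j ℓ : Fin M, ℓ ≠ j → p j ℓ < p j j)
    (gtilde : Ω → Fin M)
    (hmaj : ∀ ω, ∀ j : Fin M,
      (∑ i : Fin t, if g (V i ω) = j then (1 : ℝ) else 0)
        ≤ ∑ i : Fin t, if g (V i ω) = gtilde ω then (1 : ℝ) else 0) :
    (μ {ω | gtilde ω ≠ Y ω}).toReal
      ≤ Finset.univ.sup' Finset.univ_nonempty (fun j : Fin M =>
          ∑ ℓ ∈ Finset.univ.erase j, (1 - (sqrt (p j j) - sqrt (p j ℓ)) ^ 2) ^ t) := by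
  set S := Finset.univ.sup' Finset.univ_nonempty (fun j : Fin M =>
      ∑ ℓ ∈ Finset.univ.erase j, (1 - (sqrt (p j j) - sqrt (p j ℓ)) ^ 2) ^ t) with hS_def
  by_cases hM1 : M = 1
  · -- trivial case `M = 1`
    subst hM1
    have h1 : {ω | gtilde ω ≠ Y ω} = ∅ := by
      ext ω; simp [Subsingleton.elim (gtilde ω) (Y ω)]
    rw [h1]
    simp only [measure_empty, ENNReal.toReal_zero]
    have h2 : (Finset.univ : Finset (Fin 1)).erase (0 : Fin 1) = (∅ : Finset (Fin 1)) := by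
      ext x
      simp [Subsingleton.elim x 0]
    have h3 := Finset.le_sup' (f := fun j : Fin 1 =>
      ∑ ℓ ∈ Finset.univ.erase j, (1 - (sqrt (p j j) - sqrt (p j ℓ)) ^ 2) ^ t)
      (Finset.mem_univ (0 : Fin 1))
    rw [h2, Finset.sum_empty] at h3
    exact h3
  have hM2 : 1 < M := by
    have := NeZero.ne M
    omega
  rcases Nat.eq_zero_or_pos t with ht0 | ht
  · -- trivial case `t = 0`
    subst ht0
    have hLHS : (μ {ω | gtilde ω ≠ Y ω}).toReal ≤ 1 := by
      have h1 : μ {ω | gtilde ω ≠ Y ω} ≤ 1 := prob_le_one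
      simpa using ENNReal.toReal_mono ENNReal.one_ne_top h1
    have j0 : Fin M := ⟨0, by omega⟩
    have hfj0 : (∑ ℓ ∈ Finset.univ.erase j0, (1 - (sqrt (p j0 j0) - sqrt (p j0 ℓ)) ^ 2) ^ 0)
        = ((M - 1 : ℕ) : ℝ) := by
      simp only [pow_zero, Finset.sum_const, nsmul_eq_mul, mul_one]
      rw [Finset.card_erase_of_mem (Finset.mem_univ _), Finset.card_univ, Fintype.card_fin]
    have h3 := Finset.le_sup' (f := fun j : Fin M =>
      ∑ ℓ ∈ Finset.univ.erase j, (1 - (sqrt (p j j) - sqrt (p j ℓ)) ^ 2) ^ 0)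
      (Finset.mem_univ j0)
    rw [hfj0] at h3
    refine le_trans hLHS (le_trans ?_ h3)
    have : (1 : ℕ) ≤ M - 1 := by omega
    exact_mod_cast this
  -- main case
  obtain ⟨i0⟩ : Nonempty (Fin t) := ⟨⟨0, ht⟩⟩
  have hTmeas : ∀ j : Fin M, MeasurableSet (Y ⁻¹' {j}) :=
    fun j => hY (measurableSet_singleton j)
  have hT : ∀ j : Fin M, μ (Y ⁻¹' {j}) ≠ 0 := by
    intro j h0
    have hzero : μ[|Y ⁻¹' {j}] = 0 := by
      rw [ProbabilityTheory.cond, Measure.restrict_eq_zero.mpr h0, smul_zero]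
    obtain ⟨ℓ, hℓ⟩ := Fintype.exists_ne_of_one_lt_card (by simpa using hM2) j
    have hd := hdom j ℓ hℓ
    rw [hp j ℓ i0, hp j j i0, hzero] at hd
    simp at hd
  have hprobinst : ∀ j : Fin M, IsProbabilityMeasure (μ[|Y ⁻¹' {j}]) :=
    fun j => cond_isProbabilityMeasure (hT j)
  -- nonnegativity facts
  have hp_nonneg : ∀ j ℓ : Fin M, 0 ≤ p j ℓ := by
    intro j ℓ; rw [hp j ℓ i0]; exact ENNReal.toReal_nonneg
  have hp_le_one : ∀ j : Fin M, p j j ≤ 1 := by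
    intro j
    haveI := hprobinst j
    rw [hp j j i0]
    simpa using ENNReal.toReal_mono ENNReal.one_ne_top
      (prob_le_one (μ := μ[|Y ⁻¹' {j}]) (s := {ω | g (V i0 ω) = j}))
  have hc_nonneg : ∀ j ℓ : Fin M, ℓ ≠ j → 0 ≤ 1 - (sqrt (p j j) - sqrt (p j ℓ)) ^ 2 := by
    intro j ℓ hℓ
    have h1 : sqrt (p j j) ≤ 1 := Real.sqrt_le_one.mpr (hp_le_one j)
    have h2 : 0 ≤ sqrt (p j ℓ) := Real.sqrt_nonneg _
    have h2' : sqrt (p j ℓ) ≤ sqrt (p j j) := Real.sqrt_le_sqrt (hdom j ℓ hℓ).le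
    have h4 : (sqrt (p j j) - sqrt (p j ℓ)) ^ 2 ≤ 1 := by
      calc (sqrt (p j j) - sqrt (p j ℓ)) ^ 2 ≤ 1 ^ 2 :=
            pow_le_pow_left₀ (by linarith) (by linarith) 2
        _ = 1 := one_pow 2
    linarith
  have hS_nonneg : 0 ≤ S := by
    have j0 : Fin M := ⟨0, by omega⟩
    have h3 := Finset.le_sup' (f := fun j : Fin M =>
      ∑ ℓ ∈ Finset.univ.erase j, (1 - (sqrt (p j j) - sqrt (p j ℓ)) ^ 2) ^ t)
      (Finset.mem_univ j0)
    refine le_trans ?_ h3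
    exact Finset.sum_nonneg (fun ℓ hℓ =>
      pow_nonneg (hc_nonneg j0 ℓ (Finset.mem_erase.mp hℓ).1) t)
  -- the union sets
  set A : Fin M → Fin M → Set Ω := fun j ℓ =>
    {ω | (∑ i, if g (V i ω) = j then (1:ℝ) else 0) ≤ ∑ i, if g (V i ω) = ℓ then (1:ℝ) else 0}
    with hA_def
  have hAmeas : ∀ j ℓ, MeasurableSet (A j ℓ) := by
    intro j ℓ
    apply measurableSet_le
    · exact Finset.measurable_sum _ (fun i _ =>
        Measurable.ite ((hg.comp (hV i)) (measurableSet_singleton j))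
          measurable_const measurable_const)
    · exact Finset.measurable_sum _ (fun i _ =>
        Measurable.ite ((hg.comp (hV i)) (measurableSet_singleton ℓ))
          measurable_const measurable_const)
  set U : Fin M → Set Ω := fun j => ⋃ ℓ ∈ Finset.univ.erase j, A j ℓ with hU_def
  have hUmeas : ∀ j, MeasurableSet (U j) :=
    fun j => (Finset.univ.erase j).measurableSet_biUnion (fun ℓ _ => hAmeas j ℓ)
  -- Chernoff bound per class
  have hcher : ∀ j ℓ : Fin M, ℓ ≠ j →
      (μ[|Y ⁻¹' {j}]) (A j ℓ) ≤ ENNReal.ofReal ((1 - (sqrt (p j j) - sqrt (p j ℓ)) ^ 2) ^ t) := by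
    intro j ℓ hℓ
    haveI := hprobinst j
    exact aux_chernoff (μ[|Y ⁻¹' {j}]) (fun i ω => g (V i ω))
      (fun i => hg.comp (hV i))
      ((hindep j).comp (fun _ => g) (fun _ => hg))
      j ℓ hℓ (p j) (fun k i => hp j k i)
      (hp_nonneg j ℓ) (hp_le_one j) (hdom j ℓ hℓ)
  -- bound for each union
  have hU_bound : ∀ j : Fin M, (μ[|Y ⁻¹' {j}]) (U j) ≤ ENNReal.ofReal S := by
    intro j
    calc (μ[|Y ⁻¹' {j}]) (U j)
        ≤ ∑ ℓ ∈ Finset.univ.erase j, (μ[|Y ⁻¹' {j}]) (A j ℓ) :=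
          measure_biUnion_finset_le _ _
      _ ≤ ∑ ℓ ∈ Finset.univ.erase j,
            ENNReal.ofReal ((1 - (sqrt (p j j) - sqrt (p j ℓ)) ^ 2) ^ t) :=
          Finset.sum_le_sum (fun ℓ hℓ => hcher j ℓ (Finset.mem_erase.mp hℓ).1)
      _ = ENNReal.ofReal (∑ ℓ ∈ Finset.univ.erase j,
            (1 - (sqrt (p j j) - sqrt (p j ℓ)) ^ 2) ^ t) :=
          (ENNReal.ofReal_sum_of_nonneg (fun ℓ hℓ =>
            pow_nonneg (hc_nonneg j ℓ (Finset.mem_erase.mp hℓ).1) t)).symm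
      _ ≤ ENNReal.ofReal S := by
          apply ENNReal.ofReal_le_ofReal
          rw [hS_def]
          exact Finset.le_sup' (fun j : Fin M =>
            ∑ ℓ ∈ Finset.univ.erase j, (1 - (sqrt (p j j) - sqrt (p j ℓ)) ^ 2) ^ t)
            (Finset.mem_univ j)
  -- inclusion
  have hsub : {ω | gtilde ω ≠ Y ω} ⊆ ⋃ j : Fin M, (Y ⁻¹' {j} ∩ U j) := by
    intro ω hω
    refine Set.mem_iUnion.mpr ⟨Y ω, ⟨rfl, ?_⟩⟩
    rw [hU_def]
    refine Set.mem_biUnion (Finset.mem_coe.mpr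
      (Finset.mem_erase.mpr ⟨hω, Finset.mem_univ _⟩)) ?_
    exact hmaj ω (Y ω)
  -- piecewise measure computation
  have hpiece : ∀ j : Fin M, μ (Y ⁻¹' {j} ∩ U j) = μ (Y ⁻¹' {j}) * (μ[|Y ⁻¹' {j}]) (U j) := by
    intro j
    rw [ProbabilityTheory.cond_apply (hTmeas j) μ (U j), ← mul_assoc,
      ENNReal.mul_inv_cancel (hT j) (measure_ne_top μ _), one_mul]
  -- final chain
  have hfinal : μ {ω | gtilde ω ≠ Y ω} ≤ ENNReal.ofReal S := by
    calc μ {ω | gtilde ω ≠ Y ω}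
        ≤ μ (⋃ j : Fin M, (Y ⁻¹' {j} ∩ U j)) := measure_mono hsub
      _ ≤ ∑ j : Fin M, μ (Y ⁻¹' {j} ∩ U j) := measure_iUnion_fintype_le μ _
      _ ≤ ∑ j : Fin M, μ (Y ⁻¹' {j}) * ENNReal.ofReal S := by
          refine Finset.sum_le_sum (fun j _ => ?_)
          rw [hpiece j]
          exact mul_le_mul_right (hU_bound j) _
      _ = (∑ j : Fin M, μ (Y ⁻¹' {j})) * ENNReal.ofReal S := by
          rw [Finset.sum_mul]
      _ = ENNReal.ofReal S := by
          have h1 : ∑ j : Fin M, μ (Y ⁻¹' {j}) = μ (Y ⁻¹' ↑(univ : Finset (Fin M))) :=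
            sum_measure_preimage_singleton univ (fun j _ => hTmeas j)
          rw [h1, Finset.coe_univ, Set.preimage_univ, measure_univ, one_mul]
  exact ENNReal.toReal_le_of_le_ofReal hS_nonneg hfinal
end
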